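/- arXiv:2505.19520 — 3 statements merged into one kernel-verified Lean document; each statement's English description precedes it below -/
import Mathlib

section
/- Let D ⊆ L(A) be a peak-pit Condorcet domain on a finite set A of alternatives, let R, T ∈ D, and let B ⊆ A be a subset with |B| ≥ 3. Then there exists a geodesic 𝒜 connecting R_B and T_B such that D_B ∪ K(𝒜) is a peak-pit Condorcet domain. -/
/-!
Common definitions for formalizing Condorcet domains.

A linear order on a finite set `A : Finset α` of alternatives is encoded as a
duplicate-free list enumerating the elements of `A` from most preferred (head)
to least preferred (last).
-/

variable {α : Type*}

/-- `l` is a linear order on the finite set `A` of alternatives. -/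
def IsLinOrd [DecidableEq α] (A : Finset α) (l : List α) : Prop :=
  l.Nodup ∧ l.toFinset = A

/-- The restriction of a linear order `l` to the subset `S` of alternatives. -/
def restrictOrd [DecidableEq α] (l : List α) (S : Finset α) : List α :=
  l.filter (fun x => decide (x ∈ S))

/-- The restriction of a domain `D` to the subset `S` of alternatives. -/
def restrictDom [DecidableEq α] (D : Set (List α)) (S : Finset α) : Set (List α) :=
  (fun l => restrictOrd l S) '' D

/-- The never-condition `x N (k+1)`: no linear order in `E` ranks `x` in
position `k+1` (positions are counted from `1`, so `k : Fin 3` is the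
zero-based index).  `k = 0` is a never-top condition, `k = 2` a never-bottom
condition. -/
def NeverCond (E : Set (List α)) (x : α) (k : Fin 3) : Prop :=
  ∀ l ∈ E, l[(k : ℕ)]? ≠ some x

/-- The set of never-conditions (encoded as pairs `(x, k)`) satisfied by a
domain `E` on the triple `T`. -/
def NeverConds (T : Finset α) (E : Set (List α)) : Set (α × Fin 3) :=
  {p | p.1 ∈ T ∧ NeverCond E p.1 p.2}

/-- The set of peak-pit conditions (never-top or never-bottom conditions)
satisfied by a domain `E` on the triple `T`. -/
def PeakPitConds (T : Finset α) (E : Set (List α)) : Set (α × Fin 3) :=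
  {p | p.1 ∈ T ∧ (p.2 = 0 ∨ p.2 = 2) ∧ NeverCond E p.1 p.2}

/-- `D` is a Condorcet domain on `A`: a set of linear orders on `A` whose
restriction to every triple of distinct alternatives satisfies some
never-condition. -/
def IsCondorcetDomain [DecidableEq α] (A : Finset α) (D : Set (List α)) : Prop :=
  (∀ l ∈ D, IsLinOrd A l) ∧
    ∀ a b c : α, a ∈ A → b ∈ A → c ∈ A → a ≠ b → a ≠ c → b ≠ c →
      ∃ x ∈ ({a, b, c} : Finset α), ∃ k : Fin 3,
        NeverCond (restrictDom D {a, b, c}) x k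

/-- `D` is a peak-pit Condorcet domain on `A`: a set of linear orders on `A`
whose restriction to every triple of distinct alternatives satisfies a
never-top or a never-bottom condition. -/
def IsPeakPitDomain [DecidableEq α] (A : Finset α) (D : Set (List α)) : Prop :=
  (∀ l ∈ D, IsLinOrd A l) ∧
    ∀ a b c : α, a ∈ A → b ∈ A → c ∈ A → a ≠ b → a ≠ c → b ≠ c →
      ∃ x ∈ ({a, b, c} : Finset α),
        NeverCond (restrictDom D {a, b, c}) x 0 ∨
          NeverCond (restrictDom D {a, b, c}) x 2

/-- Two linear orders are alike if they differ by a swap of two adjacent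
alternatives. -/
def Alike (R T : List α) : Prop :=
  ∃ (l₁ l₂ : List α) (x y : α), x ≠ y ∧
    R = l₁ ++ x :: y :: l₂ ∧ T = l₁ ++ y :: x :: l₂

/-- `P` is a path of alike linear orders on `L(A)`. -/
def IsPathOn [DecidableEq α] (A : Finset α) (P : List (List α)) : Prop :=
  P ≠ [] ∧ (∀ l ∈ P, IsLinOrd A l) ∧ P.Chain' Alike

/-- `P` is a path of alike linear orders on `L(A)` connecting `R` and `T`. -/
def IsPath [DecidableEq α] (A : Finset α) (P : List (List α)) (R T : List α) : Prop :=
  IsPathOn A P ∧ P.head? = some R ∧ P.getLast? = some T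

/-- `P` is a geodesic on `L(A)` connecting `R` and `T`: a path of alike linear
orders of minimal length among all such paths. -/
def IsGeodesic [DecidableEq α] (A : Finset α) (P : List (List α)) (R T : List α) : Prop :=
  IsPath A P R T ∧ ∀ Q : List (List α), IsPath A Q R T → P.length ≤ Q.length

/-- The switching pair of alternatives between two alike linear orders (as an
unordered pair); `none` if the two lists do not differ. -/
def switchPair? [DecidableEq α] (R T : List α) : Option (Sym2 α) :=
  ((R.zip T).find? (fun p => decide (p.1 ≠ p.2))).map Sym2.mk.uncurry

/-- `S(P)`: the sequence of switching pairs of a path of alike linear orders. -/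
def switchSeq [DecidableEq α] (P : List (List α)) : List (Sym2 α) :=
  (P.zip P.tail).filterMap (fun p => switchPair? p.1 p.2)

/-- The restriction of a path to the subset `B`: restrict every member and
remove consecutive duplicates. -/
def restrictPath [DecidableEq α] (P : List (List α)) (B : Finset α) : List (List α) :=
  (P.map (fun l => restrictOrd l B)).destutter (· ≠ ·)

/-- `D` is connected: any two of its members are joined by a path of alike
linear orders lying entirely in `D`. -/
def ConnectedDomain [DecidableEq α] (A : Finset α) (D : Set (List α)) : Prop :=
  ∀ R ∈ D, ∀ T ∈ D, ∃ P : List (List α), IsPath A P R T ∧ ∀ l ∈ P, l ∈ D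

/-- `D` is directly connected: any two of its members are joined by a geodesic
lying entirely in `D`. -/
def DirectlyConnectedDomain [DecidableEq α] (A : Finset α) (D : Set (List α)) : Prop :=
  ∀ R ∈ D, ∀ T ∈ D, ∃ P : List (List α), IsGeodesic A P R T ∧ ∀ l ∈ P, l ∈ D

/-- Two unordered pairs of alternatives are disjoint. -/
def DisjointPair (p q : Sym2 α) : Prop := ∀ x : α, x ∈ p → x ∉ q

/-- One swap of an adjacent disjoint pair of switching pairs in a sequence of
switching pairs. -/
inductive AdjSwap : List (Sym2 α) → List (Sym2 α) → Prop
  | swap (l₁ l₂ : List (Sym2 α)) (p q : Sym2 α) (h : DisjointPair p q) :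
      AdjSwap (l₁ ++ p :: q :: l₂) (l₁ ++ q :: p :: l₂)

/-- Two paths are equivalent if their sequences of switching pairs differ by a
finite number of swaps of adjacent disjoint pairs of switching pairs. -/
def PathEquiv [DecidableEq α] (P Q : List (List α)) : Prop :=
  Relation.ReflTransGen AdjSwap (switchSeq P) (switchSeq Q)

/-- Two domains are isomorphic if some bijection between the underlying sets of
alternatives maps one domain onto the other (acting position-wise on linear
orders). -/
def DomIsomorphic (A B : Finset α) (D E : Set (List α)) : Prop :=
  ∃ f : α → α, Set.BijOn f ↑A ↑B ∧ E = (fun l => l.map f) '' D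

/-!
Restriction to `B` preserves the peak-pit property, so it suffices to join two orders `U`, `T`
of a peak-pit domain `E` by a path of `invDist B U T + 1` orders, necessarily a geodesic, all of
which can be added to `E`. By induction on the number of inversions it is enough to find one
order `M` strictly between `U` and `T` such that `E ∪ {M}` is still peak-pit.

For `S ∈ E` the majority relation of `U`, `T`, `S` is a linear order, because a majority cycle
on a triple would put each of its alternatives on top of some order of `E` and at the bottom of
another. The median lies between `U` and `T` and inherits every never-top and never-bottom
condition of `E`. If no median differs from both `U` and `T`, then every order of `E` sides with
`U` on all pairs that `U` and `T` order differently, or with `T` on all of them; in that case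
swapping an adjacent pair of `U` that `T` inverts keeps the domain peak-pit.
-/

abbrev Above (X : List α) (x y : α) : Prop := List.Sublist [x, y] X

namespace Above

variable {X : List α} {x y z : α}

lemma left_mem (h : Above X x y) : x ∈ X := h.subset (by simp)

lemma right_mem (h : Above X x y) : y ∈ X := h.subset (by simp)

lemma ne (hX : X.Nodup) (h : Above X x y) : x ≠ y := by
  rintro rfl
  exact List.nodup_iff_sublist.mp hX x h

lemma not_above (hX : X.Nodup) (h : Above X x y) : ¬Above X y x := by
  intro h'
  induction X with
  | nil => simp at h
  | cons a X ih =>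
    rw [List.nodup_cons] at hX
    rcases List.sublist_cons_iff.mp h with hxy | ⟨_, ⟨⟩, -⟩ <;>
      rcases List.sublist_cons_iff.mp h' with hyx | ⟨_, ⟨⟩, -⟩
    · exact ih hX.2 hxy hyx
    · exact hX.1 (right_mem hxy)
    · exact hX.1 (right_mem hyx)
    · exact ne (List.nodup_cons.mpr hX) h rfl

lemma trans (hX : X.Nodup) (h₁ : Above X x y) (h₂ : Above X y z) : Above X x z := by
  induction X with
  | nil => simp at h₁
  | cons a X ih =>
    rw [List.nodup_cons] at hX
    rcases List.sublist_cons_iff.mp h₁ with hxy | ⟨_, ⟨⟩, hy⟩ <;>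
      rcases List.sublist_cons_iff.mp h₂ with hyz | ⟨_, ⟨⟩, -⟩
    · exact (ih hX.2 hxy hyz).cons a
    · exact absurd (right_mem hxy) hX.1
    · exact List.cons_sublist_cons.mpr (List.singleton_sublist.mpr (right_mem hyz))
    · exact absurd (List.singleton_sublist.mp hy) hX.1

end Above

section

variable {L : List α} {x y : α}

lemma above_or_above (hx : x ∈ L) (hy : y ∈ L) (hxy : x ≠ y) :
    Above L x y ∨ Above L y x := by
  let R a b := Above L a b ∨ Above L b a
  have : Std.Symm R := ⟨fun _ _ => Or.symm⟩
  exact (List.pairwise_of_forall_sublist (R := R) fun h => Or.inl h).forall hx hy hxy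

lemma above_append_cons_cons (l₁ l₂ : List α) (u v : α) :
    Above (l₁ ++ u :: v :: l₂) u v :=
  List.sublist_append_of_sublist_right (by simp)

lemma above_reverse : Above L.reverse x y ↔ Above L y x := by
  simpa using List.reverse_sublist (l₁ := [y, x]) (l₂ := L)

lemma head?_eq_some_iff_forall_above (hL : L.Nodup) (hx : x ∈ L) :
    L.head? = some x ↔ ∀ y ∈ L, y ≠ x → Above L x y := by
  cases L with
  | nil => simp at hx
  | cons a L =>
    simp only [List.head?_cons, Option.some.injEq]
    constructor
    · rintro rfl y hy hya
      exact List.cons_sublist_cons.mpr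
        (List.singleton_sublist.mpr ((List.mem_cons.mp hy).resolve_left hya))
    · intro h
      by_contra hax
      have hxL : x ∈ L := (List.mem_cons.mp hx).resolve_left (Ne.symm hax)
      exact Above.not_above hL (h a List.mem_cons_self hax)
        (List.cons_sublist_cons.mpr (List.singleton_sublist.mpr hxL))

lemma getLast?_eq_some_iff_forall_above (hL : L.Nodup) (hx : x ∈ L) :
    L.getLast? = some x ↔ ∀ y ∈ L, y ≠ x → Above L y x := by
  rw [← List.head?_reverse,
    head?_eq_some_iff_forall_above (List.nodup_reverse.mpr hL) (List.mem_reverse.mpr hx)]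
  simp only [List.mem_reverse, above_reverse]

end

def IsTopIn (X : List α) (t : Finset α) (x : α) : Prop := ∀ y ∈ t, y ≠ x → Above X x y

def IsBotIn (X : List α) (t : Finset α) (x : α) : Prop := ∀ y ∈ t, y ≠ x → Above X y x

section LinOrd

variable [DecidableEq α] {B t : Finset α} {X Y : List α} {x y : α}

lemma IsLinOrd.mem_iff (hX : IsLinOrd B X) : x ∈ X ↔ x ∈ B := by
  rw [← hX.2, List.mem_toFinset]

lemma IsLinOrd.of_perm (hX : IsLinOrd B X) (h : Y.Perm X) : IsLinOrd B Y :=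
  ⟨h.nodup_iff.mpr hX.1, (List.toFinset_eq_of_perm _ _ h).trans hX.2⟩

lemma IsLinOrd.above_or_above (hX : IsLinOrd B X) (hx : x ∈ B) (hy : y ∈ B) (hxy : x ≠ y) :
    Above X x y ∨ Above X y x :=
  _root_.above_or_above (hX.mem_iff.mpr hx) (hX.mem_iff.mpr hy) hxy

lemma IsLinOrd.eq_of_above_imp (hX : IsLinOrd B X) (hY : IsLinOrd B Y)
    (h : ∀ x y, Above X x y → Above Y x y) : X = Y :=
  (List.perm_of_nodup_nodup_toFinset_eq hX.1 hY.1 (hX.2.trans hY.2.symm)).eq_of_pairwise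
    (fun _ _ _ _ h₁ h₂ => (Above.not_above hY.1 h₁ h₂).elim)
    (List.pairwise_of_forall_sublist fun hab => h _ _ hab) (List.pairwise_of_forall_sublist id)

lemma IsLinOrd.exists_adjacent_inversion (hX : IsLinOrd B X) (hY : IsLinOrd B Y) (hne : X ≠ Y) :
    ∃ l₁ l₂ u v, X = l₁ ++ u :: v :: l₂ ∧ Above Y v u := by
  by_contra! h
  have : Trans (Above Y) (Above Y) (Above Y) := ⟨Above.trans hY.1⟩
  have hchain : X.IsChain (Above Y) := List.isChain_iff_forall_rel_of_append_cons_cons.mpr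
    fun u v l₁ l₂ hX' => by
      have huv : Above X u v := hX' ▸ above_append_cons_cons l₁ l₂ u v
      exact (hY.above_or_above (hX.mem_iff.mp (Above.left_mem huv))
        (hX.mem_iff.mp (Above.right_mem huv)) (Above.ne hX.1 huv)).resolve_right
        (h l₁ l₂ u v hX')
  exact hne (hX.eq_of_above_imp hY fun _ _ => (List.isChain_iff_pairwise.mp hchain).forall_sublist)

lemma above_restrictOrd_iff (hx : x ∈ t) (hy : y ∈ t) :
    Above (restrictOrd X t) x y ↔ Above X x y :=
  ⟨fun h => List.Sublist.trans h List.filter_sublist,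
    fun h => by simpa [restrictOrd, hx, hy] using h.filter (fun z => decide (z ∈ t))⟩

lemma IsLinOrd.restrict (hX : IsLinOrd B X) (ht : t ⊆ B) : IsLinOrd t (restrictOrd X t) := by
  refine ⟨hX.1.filter _, ?_⟩
  ext x
  simpa [restrictOrd, hX.mem_iff] using fun hx => ht hx

lemma restrictOrd_restrictOrd (ht : t ⊆ B) (X : List α) :
    restrictOrd (restrictOrd X B) t = restrictOrd X t := by
  simp only [restrictOrd, List.filter_filter]
  exact List.filter_congr fun x _ => by
    by_cases hx : x ∈ t
    · simp [hx, ht hx]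
    · simp [hx]

lemma IsLinOrd.getElem_zero_restrictOrd_eq_some_iff (hX : IsLinOrd B X) (ht : t ⊆ B)
    (hx : x ∈ t) : (restrictOrd X t)[0]? = some x ↔ IsTopIn X t x := by
  have hR := hX.restrict ht
  rw [← List.head?_eq_getElem?, head?_eq_some_iff_forall_above hR.1 (hR.mem_iff.mpr hx)]
  exact forall_congr' fun y => by
    rw [hR.mem_iff]
    exact forall_congr' fun hy => imp_congr_right fun _ => above_restrictOrd_iff hx hy

lemma IsLinOrd.getElem_two_restrictOrd_eq_some_iff (hX : IsLinOrd B X) (ht : t ⊆ B)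
    (ht3 : t.card = 3) (hx : x ∈ t) : (restrictOrd X t)[2]? = some x ↔ IsBotIn X t x := by
  have hR := hX.restrict ht
  have hlen : (restrictOrd X t).length = 3 := by
    rw [← List.toFinset_card_of_nodup hR.1, hR.2, ht3]
  rw [show (2 : ℕ) = (restrictOrd X t).length - 1 by omega, ← List.getLast?_eq_getElem?,
    getLast?_eq_some_iff_forall_above hR.1 (hR.mem_iff.mpr hx)]
  exact forall_congr' fun y => by
    rw [hR.mem_iff]
    exact forall_congr' fun hy => imp_congr_right fun _ => above_restrictOrd_iff hy hx

end LinOrd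

section PeakPit

variable [DecidableEq α] {B t : Finset α} {E E' : Set (List α)} {X : List α} {x : α}

lemma IsPeakPitDomain.mono (hE' : IsPeakPitDomain B E') (hsub : E ⊆ E') : IsPeakPitDomain B E :=
  ⟨fun X hX => hE'.1 X (hsub hX), fun a b c ha hb hc hab hac hbc =>
    let ⟨x, hx, h⟩ := hE'.2 a b c ha hb hc hab hac hbc
    ⟨x, hx, h.imp (fun h X hX => h X (Set.image_mono hsub hX))
      (fun h X hX => h X (Set.image_mono hsub hX))⟩⟩

lemma IsPeakPitDomain.restrict {A : Finset α} {D : Set (List α)} (hD : IsPeakPitDomain A D)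
    (hBA : B ⊆ A) : IsPeakPitDomain B (restrictDom D B) := by
  refine ⟨by rintro _ ⟨X, hX, rfl⟩; exact (hD.1 X hX).restrict hBA,
    fun a b c ha hb hc hab hac hbc => ?_⟩
  have hsub : ({a, b, c} : Finset α) ⊆ B := by simp [Finset.insert_subset_iff, ha, hb, hc]
  have hres : restrictDom (restrictDom D B) {a, b, c} = restrictDom D {a, b, c} := by
    simp only [restrictDom, Set.image_image, restrictOrd_restrictOrd hsub]
  rw [hres]
  exact hD.2 a b c (hBA ha) (hBA hb) (hBA hc) hab hac hbc

lemma neverCond_zero_restrictDom_iff (hE : ∀ X ∈ E, IsLinOrd B X) (ht : t ⊆ B)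
    (hx : x ∈ t) : NeverCond (restrictDom E t) x 0 ↔ ∀ X ∈ E, ¬IsTopIn X t x := by
  simp only [NeverCond, restrictDom, Set.forall_mem_image]
  exact forall₂_congr fun X hX => not_congr ((hE X hX).getElem_zero_restrictOrd_eq_some_iff ht hx)

lemma neverCond_two_restrictDom_iff (hE : ∀ X ∈ E, IsLinOrd B X) (ht : t ⊆ B)
    (ht3 : t.card = 3) (hx : x ∈ t) :
    NeverCond (restrictDom E t) x 2 ↔ ∀ X ∈ E, ¬IsBotIn X t x := by
  simp only [NeverCond, restrictDom, Set.forall_mem_image]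
  exact forall₂_congr fun X hX =>
    not_congr ((hE X hX).getElem_two_restrictOrd_eq_some_iff ht ht3 hx)

theorem isPeakPitDomain_iff : IsPeakPitDomain B E ↔ (∀ X ∈ E, IsLinOrd B X) ∧
      ∀ t ⊆ B, t.card = 3 →
        ∃ x ∈ t, (∀ X ∈ E, ¬IsTopIn X t x) ∨ (∀ X ∈ E, ¬IsBotIn X t x) := by
  refine and_congr_right fun hE =>
    ⟨fun h t ht ht3 => ?_, fun h a b c ha hb hc hab hac hbc => ?_⟩
  · obtain ⟨a, b, c, hab, hac, hbc, rfl⟩ := Finset.card_eq_three.mp ht3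
    obtain ⟨x, hx, hnever⟩ := h a b c (ht (by simp)) (ht (by simp)) (ht (by simp)) hab hac hbc
    exact ⟨x, hx, hnever.imp (neverCond_zero_restrictDom_iff hE ht hx).mp
      (neverCond_two_restrictDom_iff hE ht ht3 hx).mp⟩
  · have ht : ({a, b, c} : Finset α) ⊆ B := by simp [Finset.insert_subset_iff, ha, hb, hc]
    have ht3 : ({a, b, c} : Finset α).card = 3 :=
      Finset.card_eq_three.mpr ⟨a, b, c, hab, hac, hbc, rfl⟩
    obtain ⟨x, hx, hnever⟩ := h _ ht ht3
    exact ⟨x, hx, hnever.imp (neverCond_zero_restrictDom_iff hE ht hx).mpr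
      (neverCond_two_restrictDom_iff hE ht ht3 hx).mpr⟩

lemma Finset.exists_eq_insert_insert_singleton_of_mem (ht3 : t.card = 3) (hx : x ∈ t) :
    ∃ y z, x ≠ y ∧ x ≠ z ∧ y ≠ z ∧ t = {x, y, z} := by
  obtain ⟨y, z, hyz, he⟩ := Finset.card_eq_two.mp (by rw [Finset.card_erase_of_mem hx, ht3])
  have hy : y ∈ t.erase x := by simp [he]
  have hz : z ∈ t.erase x := by simp [he]
  exact ⟨y, z, (Finset.ne_of_mem_erase hy).symm, (Finset.ne_of_mem_erase hz).symm, hyz,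
    by rw [← Finset.insert_erase hx, he]⟩

lemma isTopIn_triple_iff {y z : α} (hxy : x ≠ y) (hxz : x ≠ z) :
    IsTopIn X {x, y, z} x ↔ Above X x y ∧ Above X x z := by
  simp [IsTopIn, hxy.symm, hxz.symm]

lemma isBotIn_triple_iff {y z : α} (hxy : x ≠ y) (hxz : x ≠ z) :
    IsBotIn X {x, y, z} x ↔ Above X y x ∧ Above X z x := by
  simp [IsBotIn, hxy.symm, hxz.symm]

end PeakPit

section Swap

variable [DecidableEq α] {l₁ l₂ : List α} {u v x y : α}

lemma restrictOrd_swap {t : Finset α} (h : u ∉ t ∨ v ∉ t) :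
    restrictOrd (l₁ ++ v :: u :: l₂) t = restrictOrd (l₁ ++ u :: v :: l₂) t := by
  rcases h with h | h <;> by_cases h' : u ∈ t <;> by_cases h'' : v ∈ t <;>
    simp_all [restrictOrd]

lemma Above.swap (h : Above (l₁ ++ u :: v :: l₂) x y) (hne : ¬(x = u ∧ y = v)) :
    Above (l₁ ++ v :: u :: l₂) x y := by
  rcases eq_or_ne u v with rfl | huv
  · exact h
  by_cases hvu : x = v ∧ y = u
  · obtain ⟨rfl, rfl⟩ := hvu
    exact above_append_cons_cons l₁ l₂ x y
  have hxy : u ∉ ({x, y} : Finset α) ∨ v ∉ ({x, y} : Finset α) := by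
    simp only [Finset.mem_insert, Finset.mem_singleton]
    grind
  rw [← above_restrictOrd_iff (t := {x, y}) (by simp) (by simp), restrictOrd_swap hxy,
    above_restrictOrd_iff (by simp) (by simp)]
  exact h

end Swap

section InvDist

variable [DecidableEq α] {B : Finset α} {U T M X Y : List α}

def invPairs (B : Finset α) (X Y : List α) : Finset (α × α) :=
  (B ×ˢ B).filter fun p => Above X p.1 p.2 ∧ Above Y p.2 p.1

def invDist (B : Finset α) (X Y : List α) : ℕ := (invPairs B X Y).card

lemma mem_invPairs {p : α × α} :
    p ∈ invPairs B X Y ↔ p.1 ∈ B ∧ p.2 ∈ B ∧ Above X p.1 p.2 ∧ Above Y p.2 p.1 := by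
  simp [invPairs, and_assoc]

lemma invDist_self (hX : X.Nodup) : invDist B X X = 0 :=
  Finset.card_eq_zero.mpr (Finset.filter_false_of_mem fun _ _ h => Above.not_above hX h.1 h.2)

lemma IsLinOrd.eq_of_invDist_eq_zero (hX : IsLinOrd B X) (hY : IsLinOrd B Y)
    (h : invDist B X Y = 0) : X = Y := by
  by_contra hne
  obtain ⟨l₁, l₂, u, v, rfl, hvu⟩ := hX.exists_adjacent_inversion hY hne
  have huv := above_append_cons_cons l₁ l₂ u v
  have hmem : (u, v) ∈ invPairs B (l₁ ++ u :: v :: l₂) Y := mem_invPairs.mpr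
    ⟨hX.mem_iff.mp (Above.left_mem huv), hX.mem_iff.mp (Above.right_mem huv), huv, hvu⟩
  simp [Finset.card_eq_zero.mp h] at hmem

lemma invDist_swap {l₁ l₂ : List α} {u v : α} (hU : IsLinOrd B (l₁ ++ u :: v :: l₂))
    (hT : T.Nodup) (hvu : Above T v u) :
    invDist B (l₁ ++ u :: v :: l₂) T = invDist B (l₁ ++ v :: u :: l₂) T + 1 := by
  have hU' := hU.of_perm ((List.Perm.swap u v l₂).append_left l₁)
  have huv := above_append_cons_cons l₁ l₂ u v
  have hvu' := above_append_cons_cons l₁ l₂ v u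
  have hins : invPairs B (l₁ ++ u :: v :: l₂) T =
      insert (u, v) (invPairs B (l₁ ++ v :: u :: l₂) T) := by
    ext ⟨x, y⟩
    simp only [Finset.mem_insert, mem_invPairs, Prod.mk.injEq]
    constructor
    · rintro ⟨hx, hy, hxy, hyx⟩
      by_cases h : x = u ∧ y = v
      · exact Or.inl h
      · exact Or.inr ⟨hx, hy, Above.swap hxy h, hyx⟩
    · rintro (⟨rfl, rfl⟩ | ⟨hx, hy, hxy, hyx⟩)
      · exact ⟨hU.mem_iff.mp (Above.left_mem huv), hU.mem_iff.mp (Above.right_mem huv), huv,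
          hvu⟩
      · refine ⟨hx, hy, Above.swap hxy ?_, hyx⟩
        rintro ⟨rfl, rfl⟩
        exact Above.not_above hT hvu hyx
  rw [invDist, hins, Finset.card_insert_of_notMem fun h =>
    Above.not_above hU'.1 hvu' (mem_invPairs.mp h).2.2.1]
  rfl

lemma IsLinOrd.alike_of_invDist_eq_one (hX : IsLinOrd B X) (hY : IsLinOrd B Y)
    (h : invDist B X Y = 1) : Alike X Y := by
  have hne : X ≠ Y := by rintro rfl; simp [invDist_self hX.1] at h
  obtain ⟨l₁, l₂, u, v, rfl, hvu⟩ := hX.exists_adjacent_inversion hY hne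
  have hX' := hX.of_perm ((List.Perm.swap u v l₂).append_left l₁)
  have h0 : invDist B (l₁ ++ v :: u :: l₂) Y = 0 := by
    have := invDist_swap hX hY.1 hvu
    omega
  exact ⟨l₁, l₂, u, v, (Above.ne hY.1 hvu).symm, rfl,
    (hX'.eq_of_invDist_eq_zero hY h0).symm⟩

lemma invDist_le_of_alike (hX : IsLinOrd B X) (hT : IsLinOrd B T) (h : Alike X Y) :
    invDist B X T ≤ invDist B Y T + 1 := by
  obtain ⟨l₁, l₂, u, v, huv, rfl, rfl⟩ := h
  have hu : u ∈ B := hX.mem_iff.mp (by simp)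
  have hv : v ∈ B := hX.mem_iff.mp (by simp)
  rcases hT.above_or_above hu hv huv with h | h
  · have := invDist_swap (hX.of_perm ((List.Perm.swap u v l₂).append_left l₁)) hT.1 h
    omega
  · exact (invDist_swap hX hT.1 h).le

lemma IsPath.invDist_add_one_le {P : List (List α)} (hP : IsPath B P X Y) :
    invDist B X Y + 1 ≤ P.length := by
  obtain ⟨⟨hne, hlin, hchain⟩, hhead, hlast⟩ := hP
  have hY := hlin Y (List.mem_of_getLast? hlast)
  induction P generalizing X with
  | nil => exact absurd rfl hne
  | cons Z P ih =>
    obtain rfl : Z = X := by simpa using hhead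
    cases P with
    | nil =>
      obtain rfl : Z = Y := by simpa using hlast
      simp [invDist_self (hlin Z (by simp)).1]
    | cons W P =>
      have hZW : Alike Z W := (List.isChain_cons_cons.mp hchain).1
      have := ih (by simp) (fun l hl => hlin l (by simp [hl])) hchain.tail rfl
        (by simpa using hlast)
      have := invDist_le_of_alike (hlin Z (by simp)) hY hZW
      simp only [List.length_cons] at *
      omega

def IsBetween (U T M : List α) : Prop := ∀ x y, Above U x y → Above T x y → Above M x y

lemma IsBetween.invDist_add_invDist (hU : IsLinOrd B U) (hT : IsLinOrd B T) (hM : IsLinOrd B M)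
    (h : IsBetween U T M) : invDist B U M + invDist B M T = invDist B U T := by
  have hunion : invPairs B U T = invPairs B U M ∪ invPairs B M T := by
    ext ⟨x, y⟩
    simp only [Finset.mem_union, mem_invPairs]
    constructor
    · rintro ⟨hx, hy, hxy, hyx⟩
      rcases hM.above_or_above hx hy (Above.ne hU.1 hxy) with h' | h'
      exacts [Or.inr ⟨hx, hy, h', hyx⟩, Or.inl ⟨hx, hy, hxy, h'⟩]
    · rintro (⟨hx, hy, hxy, hyx⟩ | ⟨hx, hy, hxy, hyx⟩)
      · refine ⟨hx, hy, hxy, (hT.above_or_above hy hx (Above.ne hM.1 hyx)).resolve_right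
          fun h' => Above.not_above hM.1 hyx (h x y hxy h')⟩
      · refine ⟨hx, hy, (hU.above_or_above hx hy (Above.ne hM.1 hxy)).resolve_right
          fun h' => Above.not_above hM.1 hxy (h y x h' hyx), hyx⟩
  have hdisj : Disjoint (invPairs B U M) (invPairs B M T) := Finset.disjoint_left.mpr
    fun _ h₁ h₂ =>
      Above.not_above hM.1 (mem_invPairs.mp h₂).2.2.1 (mem_invPairs.mp h₁).2.2.2
  rw [invDist, invDist, invDist, hunion, Finset.card_union_of_disjoint hdisj]

end InvDist

section Majority

variable {U T S : List α} {x y z x' y' : α}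

def Majority (U T S : List α) (x y : α) : Prop :=
  (Above U x y ∧ Above T x y) ∨ (Above U x y ∧ Above S x y) ∨ (Above T x y ∧ Above S x y)

lemma Majority.exists_above_above (h : Majority U T S x y) (h' : Majority U T S x' y') :
    ∃ W ∈ ({U, T, S} : Set (List α)), Above W x y ∧ Above W x' y' := by
  rcases h with ⟨_, _⟩ | ⟨_, _⟩ | ⟨_, _⟩ <;>
    rcases h' with ⟨_, _⟩ | ⟨_, _⟩ | ⟨_, _⟩ <;>
    first
      | exact ⟨U, by simp, ‹_›, ‹_›⟩
      | exact ⟨T, by simp, ‹_›, ‹_›⟩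
      | exact ⟨S, by simp, ‹_›, ‹_›⟩

lemma Majority.not_majority (hU : U.Nodup) (hT : T.Nodup) (hS : S.Nodup)
    (h : Majority U T S x y) : ¬Majority U T S y x := fun h' => by
  obtain ⟨W, hW, hxy, hyx⟩ := h.exists_above_above h'
  rcases hW with rfl | rfl | rfl
  exacts [Above.not_above hU hxy hyx, Above.not_above hT hxy hyx, Above.not_above hS hxy hyx]

variable [DecidableEq α] {B : Finset α} {E : Set (List α)}

lemma majority_or_majority (hU : IsLinOrd B U) (hT : IsLinOrd B T) (hS : IsLinOrd B S)
    (hx : x ∈ B) (hy : y ∈ B) (hxy : x ≠ y) : Majority U T S x y ∨ Majority U T S y x := by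
  unfold Majority
  rcases hU.above_or_above hx hy hxy with _ | _ <;>
    rcases hT.above_or_above hx hy hxy with _ | _ <;>
    rcases hS.above_or_above hx hy hxy with _ | _ <;> tauto

lemma Majority.exists_mem_above_above_above (hE : ∀ X ∈ E, IsLinOrd B X) (hU : U ∈ E)
    (hT : T ∈ E) (hS : S ∈ E) (h : Majority U T S x y) (h' : Majority U T S y z) :
    ∃ W ∈ E, Above W x y ∧ Above W y z ∧ Above W x z := by
  obtain ⟨W, hW, hxy, hyz⟩ := h.exists_above_above h'
  have hWE : W ∈ E := by rcases hW with rfl | rfl | rfl <;> assumption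
  exact ⟨W, hWE, hxy, hyz, Above.trans (hE W hWE).1 hxy hyz⟩

lemma not_majority_cycle (hE : IsPeakPitDomain B E) (hU : U ∈ E) (hT : T ∈ E) (hS : S ∈ E)
    (h₁ : Majority U T S x y) (h₂ : Majority U T S y z) (h₃ : Majority U T S z x) :
    False := by
  obtain ⟨W₁, hW₁, hxy, hyz, hxz⟩ := h₁.exists_mem_above_above_above hE.1 hU hT hS h₂
  obtain ⟨W₂, hW₂, hyz', hzx, hyx⟩ := h₂.exists_mem_above_above_above hE.1 hU hT hS h₃
  obtain ⟨W₃, hW₃, hzx', hxy', hzy⟩ := h₃.exists_mem_above_above_above hE.1 hU hT hS h₁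
  have hl₁ := hE.1 W₁ hW₁
  have hxy_ne := Above.ne hl₁.1 hxy
  have hyz_ne := Above.ne hl₁.1 hyz
  have hxz_ne := Above.ne hl₁.1 hxz
  have ht : ({x, y, z} : Finset α) ⊆ B := by
    simp [Finset.insert_subset_iff, hl₁.mem_iff.mp (Above.left_mem hxy),
      hl₁.mem_iff.mp (Above.left_mem hyz), hl₁.mem_iff.mp (Above.right_mem hyz)]
  obtain ⟨w, hw, hnever⟩ := (isPeakPitDomain_iff.mp hE).2 _ ht
    (Finset.card_eq_three.mpr ⟨x, y, z, hxy_ne, hxz_ne, hyz_ne, rfl⟩)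
  simp only [Finset.mem_insert, Finset.mem_singleton] at hw
  -- `W₁`, `W₂`, `W₃` rank the triple as `x y z`, `y z x` and `z x y`.
  rcases hw with rfl | rfl | rfl <;> rcases hnever with h | h
  · exact h W₁ hW₁ (by simp [IsTopIn, *])
  · exact h W₂ hW₂ (by simp [IsBotIn, *])
  · exact h W₂ hW₂ (by simp [IsTopIn, *])
  · exact h W₃ hW₃ (by simp [IsBotIn, *])
  · exact h W₃ hW₃ (by simp [IsTopIn, *])
  · exact h W₁ hW₁ (by simp [IsBotIn, *])

lemma Majority.trans (hE : IsPeakPitDomain B E) (hU : U ∈ E) (hT : T ∈ E) (hS : S ∈ E)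
    (h₁ : Majority U T S x y) (h₂ : Majority U T S y z) : Majority U T S x z := by
  obtain ⟨W, hW, -, -, hxz⟩ := h₁.exists_mem_above_above_above hE.1 hU hT hS h₂
  have hWl := hE.1 W hW
  exact (majority_or_majority (hE.1 U hU) (hE.1 T hT) (hE.1 S hS)
    (hWl.mem_iff.mp (Above.left_mem hxz)) (hWl.mem_iff.mp (Above.right_mem hxz))
    (Above.ne hWl.1 hxz)).resolve_right (not_majority_cycle hE hU hT hS h₁ h₂)

end Majority

section Median

variable [DecidableEq α] {B : Finset α} {E : Set (List α)} {U T S M : List α}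

lemma IsLinOrd.exists_isLinOrd_above_iff (hU : IsLinOrd B U) (r : α → α → Prop)
    (hmem : ∀ x y, r x y → x ∈ B ∧ y ∈ B) (hasymm : ∀ x y, r x y → ¬r y x)
    (htrans : ∀ x y z, r x y → r y z → r x z)
    (htotal : ∀ x ∈ B, ∀ y ∈ B, x ≠ y → r x y ∨ r y x) :
    ∃ M, IsLinOrd B M ∧ ∀ x y, Above M x y ↔ r x y := by
  classical
  let le : {x // x ∈ U} → {x // x ∈ U} → Bool := fun a b => decide (r a.1 b.1 ∨ a.1 = b.1)
  have hsorted := List.pairwise_mergeSort (l := U.attach) (le := le)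
    (fun a b c hab hbc => by
      simp only [le, decide_eq_true_eq] at *
      rcases hab with hab | hab <;> rcases hbc with hbc | hbc
      exacts [Or.inl (htrans _ _ _ hab hbc), Or.inl (hbc ▸ hab), Or.inl (hab ▸ hbc),
        Or.inr (hab.trans hbc)])
    (fun a b => by
      by_cases hab : a.1 = b.1
      · simp [le, hab]
      · rcases htotal a (hU.mem_iff.mp a.2) b (hU.mem_iff.mp b.2) hab with h | h <;> simp [le, h])
  let M := (U.attach.mergeSort le).map Subtype.val
  have hM : IsLinOrd B M := hU.of_perm (by
    simpa only [List.attach_map_subtype_val] using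
      (List.mergeSort_perm U.attach le).map Subtype.val)
  have hpair : M.Pairwise fun a b => r a b ∨ a = b :=
    List.pairwise_map.mpr (hsorted.imp fun h => by simpa [le] using h)
  refine ⟨M, hM, fun x y => ⟨fun h => (hpair.forall_sublist h).resolve_right (Above.ne hM.1 h),
    fun h => ?_⟩⟩
  obtain ⟨hx, hy⟩ := hmem x y h
  have hxy : x ≠ y := by rintro rfl; exact hasymm x x h h
  refine (hM.above_or_above hx hy hxy).resolve_right fun h' => ?_
  rcases hpair.forall_sublist h' with h' | rfl
  exacts [hasymm x y h h', hxy rfl]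

lemma exists_isLinOrd_above_iff_majority (hE : IsPeakPitDomain B E) (hU : U ∈ E) (hT : T ∈ E)
    (hS : S ∈ E) : ∃ M, IsLinOrd B M ∧ ∀ x y, Above M x y ↔ Majority U T S x y := by
  have hU' := hE.1 U hU
  refine hU'.exists_isLinOrd_above_iff _ (fun x y h => ?_)
    (fun x y h => h.not_majority hU'.1 (hE.1 T hT).1 (hE.1 S hS).1)
    (fun x y z => Majority.trans hE hU hT hS)
    (fun x hx y hy => majority_or_majority hU' (hE.1 T hT) (hE.1 S hS) hx hy)
  obtain ⟨W, hW, hxy, -⟩ := h.exists_above_above h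
  have hWl : IsLinOrd B W := by rcases hW with rfl | rfl | rfl <;> exact hE.1 _ ‹_›
  exact ⟨hWl.mem_iff.mp (Above.left_mem hxy), hWl.mem_iff.mp (Above.right_mem hxy)⟩

lemma isPeakPitDomain_union_of_above_majority (hE : IsPeakPitDomain B E) (hU : U ∈ E)
    (hT : T ∈ E) (hS : S ∈ E) (hM : IsLinOrd B M)
    (hmaj : ∀ x y, Above M x y → Majority U T S x y) : IsPeakPitDomain B (E ∪ {M}) := by
  rw [isPeakPitDomain_iff] at hE ⊢
  refine ⟨by rintro X (hX | rfl); exacts [hE.1 X hX, hM], fun t ht ht3 => ?_⟩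
  obtain ⟨x, hx, hnever⟩ := hE.2 t ht ht3
  obtain ⟨y, z, hxy, hxz, -, rfl⟩ := Finset.exists_eq_insert_insert_singleton_of_mem ht3 hx
  have hWE : ∀ W ∈ ({U, T, S} : Set (List α)), W ∈ E := by
    rintro W (rfl | rfl | rfl) <;> assumption
  refine ⟨x, hx, hnever.imp (fun h => ?_) (fun h => ?_)⟩ <;> rintro X (hX | rfl) hX'
  · exact h X hX hX'
  · rw [isTopIn_triple_iff hxy hxz] at hX'
    obtain ⟨W, hW, h₁, h₂⟩ := (hmaj _ _ hX'.1).exists_above_above (hmaj _ _ hX'.2)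
    exact h W (hWE W hW) ((isTopIn_triple_iff hxy hxz).mpr ⟨h₁, h₂⟩)
  · exact h X hX hX'
  · rw [isBotIn_triple_iff hxy hxz] at hX'
    obtain ⟨W, hW, h₁, h₂⟩ := (hmaj _ _ hX'.1).exists_above_above (hmaj _ _ hX'.2)
    exact h W (hWE W hW) ((isBotIn_triple_iff hxy hxz).mpr ⟨h₁, h₂⟩)

end Median

section Step

variable [DecidableEq α] {B t : Finset α} {E : Set (List α)} {l₁ l₂ U T : List α} {u v : α}

def SidesWith (U T S : List α) : Prop := ∀ x y, Above U x y → Above T y x → Above S x y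

lemma not_isBotIn_of_isTopIn_swap (hE : ∀ X ∈ E, IsLinOrd B X)
    (hU : l₁ ++ u :: v :: l₂ ∈ E) (hT : T ∈ E) (hvu : Above T v u)
    (hsides : ∀ S ∈ E,
      SidesWith (l₁ ++ u :: v :: l₂) T S ∨ SidesWith T (l₁ ++ u :: v :: l₂) S)
    (ht : t ⊆ B) (hnever : ∀ X ∈ E, ¬IsTopIn X t v)
    (htop : IsTopIn (l₁ ++ v :: u :: l₂) t v) :
    ∀ X ∈ E ∪ {l₁ ++ v :: u :: l₂}, ¬IsBotIn X t v := by
  have hTl := hE T hT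
  have hU'l := (hE _ hU).of_perm ((List.Perm.swap u v l₂).append_left l₁)
  have back : ∀ {y}, y ≠ u →
      Above (l₁ ++ v :: u :: l₂) v y → Above (l₁ ++ u :: v :: l₂) v y :=
    fun hyu h => Above.swap h fun h' => hyu h'.2
  have hu : u ∈ t := by
    by_contra hu
    exact hnever _ hU fun y hy hyv => back (fun h => hu (h ▸ hy)) (htop y hy hyv)
  obtain ⟨w, hw, hwv, hTvw⟩ : ∃ w ∈ t, w ≠ v ∧ ¬Above T v w := by
    simpa [IsTopIn] using hnever T hT
  have hTwv : Above T w v := (hTl.above_or_above (ht hw)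
    (hTl.mem_iff.mp (Above.left_mem hvu)) hwv).resolve_right hTvw
  have hwu : w ≠ u := by rintro rfl; exact Above.not_above hTl.1 hvu hTwv
  rintro X (hX | rfl) hbot
  · obtain ⟨y, hy, hyv, hXvy⟩ : ∃ y ∈ t, y ≠ v ∧ Above X v y := by
      rcases hsides X hX with h | h
      · exact ⟨w, hw, hwv, h v w (back hwu (htop w hw hwv)) hTwv⟩
      · exact ⟨u, hu, (Above.ne hTl.1 hvu).symm,
          h v u hvu (above_append_cons_cons l₁ l₂ u v)⟩
    exact Above.not_above (hE X hX).1 hXvy (hbot y hy hyv)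
  · exact Above.not_above hU'l.1 (htop w hw hwv) (hbot w hw hwv)

lemma not_isTopIn_of_isBotIn_swap (hE : ∀ X ∈ E, IsLinOrd B X)
    (hU : l₁ ++ u :: v :: l₂ ∈ E) (hT : T ∈ E) (hvu : Above T v u)
    (hsides : ∀ S ∈ E,
      SidesWith (l₁ ++ u :: v :: l₂) T S ∨ SidesWith T (l₁ ++ u :: v :: l₂) S)
    (ht : t ⊆ B) (hnever : ∀ X ∈ E, ¬IsBotIn X t u)
    (hbot : IsBotIn (l₁ ++ v :: u :: l₂) t u) :
    ∀ X ∈ E ∪ {l₁ ++ v :: u :: l₂}, ¬IsTopIn X t u := by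
  have hTl := hE T hT
  have hU'l := (hE _ hU).of_perm ((List.Perm.swap u v l₂).append_left l₁)
  have back : ∀ {y}, y ≠ v →
      Above (l₁ ++ v :: u :: l₂) y u → Above (l₁ ++ u :: v :: l₂) y u :=
    fun hyv h => Above.swap h fun h' => hyv h'.1
  have hv : v ∈ t := by
    by_contra hv
    exact hnever _ hU fun y hy hyu => back (fun h => hv (h ▸ hy)) (hbot y hy hyu)
  obtain ⟨w, hw, hwu, hTwu⟩ : ∃ w ∈ t, w ≠ u ∧ ¬Above T w u := by
    simpa [IsBotIn] using hnever T hT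
  have hTuw : Above T u w := (hTl.above_or_above
    (hTl.mem_iff.mp (Above.right_mem hvu)) (ht hw) hwu.symm).resolve_right hTwu
  have hwv : w ≠ v := by rintro rfl; exact Above.not_above hTl.1 hvu hTuw
  rintro X (hX | rfl) htop
  · obtain ⟨y, hy, hyu, hXyu⟩ : ∃ y ∈ t, y ≠ u ∧ Above X y u := by
      rcases hsides X hX with h | h
      · exact ⟨w, hw, hwu, h w u (back hwv (hbot w hw hwu)) hTuw⟩
      · exact ⟨v, hv, Above.ne hTl.1 hvu, h v u hvu (above_append_cons_cons l₁ l₂ u v)⟩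
    exact Above.not_above (hE X hX).1 hXyu (htop y hy hyu)
  · exact Above.not_above hU'l.1 (hbot w hw hwu) (htop w hw hwu)

lemma isPeakPitDomain_union_swap (hE : IsPeakPitDomain B E) (hU : l₁ ++ u :: v :: l₂ ∈ E)
    (hT : T ∈ E) (hvu : Above T v u)
    (hsides : ∀ S ∈ E,
      SidesWith (l₁ ++ u :: v :: l₂) T S ∨ SidesWith T (l₁ ++ u :: v :: l₂) S) :
    IsPeakPitDomain B (E ∪ {l₁ ++ v :: u :: l₂}) := by
  rw [isPeakPitDomain_iff] at hE ⊢
  have hU'l := (hE.1 _ hU).of_perm ((List.Perm.swap u v l₂).append_left l₁)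
  refine ⟨by rintro X (hX | rfl); exacts [hE.1 X hX, hU'l], fun t ht ht3 => ?_⟩
  obtain ⟨x, hx, hnt | hnb⟩ := hE.2 t ht ht3
  · by_cases htop : IsTopIn (l₁ ++ v :: u :: l₂) t x
    · obtain rfl : x = v := by
        by_contra hxv
        exact hnt _ hU fun y hy hyx => Above.swap (htop y hy hyx) fun h => hxv h.1
      exact ⟨x, hx, Or.inr (not_isBotIn_of_isTopIn_swap hE.1 hU hT hvu hsides ht hnt htop)⟩
    · exact ⟨x, hx, Or.inl (by rintro X (hX | rfl); exacts [hnt X hX, htop])⟩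
  · by_cases hbot : IsBotIn (l₁ ++ v :: u :: l₂) t x
    · obtain rfl : x = u := by
        by_contra hxu
        exact hnb _ hU fun y hy hyx => Above.swap (hbot y hy hyx) fun h => hxu h.2
      exact ⟨x, hx, Or.inl (not_isTopIn_of_isBotIn_swap hE.1 hU hT hvu hsides ht hnb hbot)⟩
    · exact ⟨x, hx, Or.inr (by rintro X (hX | rfl); exacts [hnb X hX, hbot])⟩

lemma exists_isBetween_isPeakPitDomain_union (hE : IsPeakPitDomain B E) (hU : U ∈ E)
    (hT : T ∈ E) (h2 : 2 ≤ invDist B U T) :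
    ∃ M, M ≠ U ∧ M ≠ T ∧ IsBetween U T M ∧ IsPeakPitDomain B (E ∪ {M}) := by
  have hUl := hE.1 U hU
  have hTl := hE.1 T hT
  have hUT : U ≠ T := by rintro rfl; simp [invDist_self hUl.1] at h2
  obtain ⟨l₁, l₂, u, v, rfl, hvu⟩ := hUl.exists_adjacent_inversion hTl hUT
  by_cases hsides : ∀ S ∈ E,
    SidesWith (l₁ ++ u :: v :: l₂) T S ∨ SidesWith T (l₁ ++ u :: v :: l₂) S
  · refine ⟨l₁ ++ v :: u :: l₂, fun h => ?_, fun h => ?_, fun x y hx hy => Above.swap hx ?_,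
      isPeakPitDomain_union_swap hE hU hT hvu hsides⟩
    · exact Above.not_above hUl.1 (above_append_cons_cons l₁ l₂ u v)
        (h ▸ above_append_cons_cons l₁ l₂ v u)
    · have := invDist_swap hUl hTl.1 hvu
      rw [h, invDist_self hTl.1] at this
      omega
    · rintro ⟨rfl, rfl⟩
      exact Above.not_above hTl.1 hvu hy
  push Not at hsides
  obtain ⟨S, hS, hSU, hST⟩ := hsides
  obtain ⟨p, q, hUpq, hTqp, hSpq⟩ := by simpa [SidesWith] using hSU
  obtain ⟨p', q', hTpq', hUqp', hSpq'⟩ := by simpa [SidesWith] using hST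
  obtain ⟨M, hM, hmaj⟩ := exists_isLinOrd_above_iff_majority hE hU hT hS
  have hSl := hE.1 S hS
  have hSqp : Above S q p := (hSl.above_or_above (hUl.mem_iff.mp (Above.left_mem hUpq))
    (hUl.mem_iff.mp (Above.right_mem hUpq)) (Above.ne hUl.1 hUpq)).resolve_left hSpq
  have hSqp' : Above S q' p' := (hSl.above_or_above (hTl.mem_iff.mp (Above.left_mem hTpq'))
    (hTl.mem_iff.mp (Above.right_mem hTpq')) (Above.ne hTl.1 hTpq')).resolve_left hSpq'
  refine ⟨M, fun h => ?_, fun h => ?_, fun x y hx hy => (hmaj x y).mpr (Or.inl ⟨hx, hy⟩),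
    isPeakPitDomain_union_of_above_majority hE hU hT hS hM fun x y => (hmaj x y).mp⟩
  · exact Above.not_above hUl.1 hUpq (h ▸ (hmaj q p).mpr (Or.inr (Or.inr ⟨hTqp, hSqp⟩)))
  · exact Above.not_above hTl.1 hTpq' (h ▸ (hmaj q' p').mpr (Or.inr (Or.inl ⟨hUqp', hSqp'⟩)))

end Step

section Path

variable [DecidableEq α] {B : Finset α} {E : Set (List α)} {P Q : List (List α)}
  {U M T : List α}

lemma IsPath.append (hP : IsPath B P U M) (hQ : IsPath B Q M T) : IsPath B (P ++ Q.tail) U T := by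
  obtain ⟨⟨hPne, hPlin, hPchain⟩, hPhead, hPlast⟩ := hP
  obtain ⟨⟨-, hQlin, hQchain⟩, hQhead, hQlast⟩ := hQ
  obtain ⟨Q, rfl⟩ : ∃ Q', Q = M :: Q' := ⟨Q.tail, (List.eq_cons_of_mem_head? hQhead)⟩
  refine ⟨⟨by simp [hPne], fun l hl => ?_, hPchain.append hQchain.tail ?_⟩, ?_, ?_⟩
  · rcases List.mem_append.mp hl with hl | hl
    exacts [hPlin l hl, hQlin l (List.mem_cons_of_mem M hl)]
  · intro x hx y hy
    obtain rfl : x = M := by simpa [hPlast] using hx.symm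
    exact hQchain.rel_head? hy
  · simp [List.head?_append, hPhead]
  · cases Q with
    | nil =>
      obtain rfl : M = T := by simpa using hQlast
      simpa using hPlast
    | cons X Q => simpa [List.getLast?_append] using hQlast

theorem exists_isPath_isPeakPitDomain_union (hE : IsPeakPitDomain B E) (hU : U ∈ E)
    (hT : T ∈ E) : ∃ P, IsPath B P U T ∧ P.length = invDist B U T + 1 ∧
      IsPeakPitDomain B (E ∪ {l | l ∈ P}) := by
  induction h : invDist B U T using Nat.strong_induction_on generalizing E U T with
  | _ n ih =>
    have hUl := hE.1 U hU
    have hTl := hE.1 T hT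
    obtain rfl | rfl | h2 : n = 0 ∨ n = 1 ∨ 2 ≤ n := by omega
    · obtain rfl := hUl.eq_of_invDist_eq_zero hTl h
      exact ⟨[U], ⟨⟨by simp, by simpa using hUl, List.isChain_singleton U⟩, rfl, rfl⟩,
        rfl, by simpa [hU] using hE⟩
    · refine ⟨[U, T], ⟨⟨by simp, by simp [hUl, hTl], List.isChain_pair.mpr
        (hUl.alike_of_invDist_eq_one hTl h)⟩, rfl, rfl⟩, rfl, ?_⟩
      rwa [Set.union_eq_self_of_subset_right fun l hl => by
        rcases (by simpa using hl : l = U ∨ l = T) with rfl | rfl <;> assumption]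
    obtain ⟨M, hMU, hMT, hbet, hEM⟩ :=
      exists_isBetween_isPeakPitDomain_union hE hU hT (h ▸ h2)
    have hMl := hEM.1 M (Or.inr rfl)
    have hsum := hbet.invDist_add_invDist hUl hTl hMl
    have hUM : invDist B U M ≠ 0 := fun h0 => hMU (hUl.eq_of_invDist_eq_zero hMl h0).symm
    have hMT' : invDist B M T ≠ 0 := fun h0 => hMT (hMl.eq_of_invDist_eq_zero hTl h0)
    obtain ⟨P, hP, hPlen, hEP⟩ := ih _ (by omega) hEM (Or.inl hU) (Or.inr rfl) rfl
    obtain ⟨Q, hQ, hQlen, hEQ⟩ :=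
      ih _ (by omega) hEP (Or.inl (Or.inr rfl)) (Or.inl (Or.inl hT)) rfl
    refine ⟨P ++ Q.tail, hP.append hQ, ?_, hEQ.mono ?_⟩
    · simp only [List.length_append, List.length_tail]
      have : Q.length ≠ 0 := by simpa using hQ.1.1
      omega
    · intro l
      simp only [Set.mem_union, Set.mem_ofPred_eq, Set.mem_singleton_iff, List.mem_append]
      rintro (hl | hl | hl)
      exacts [Or.inl (Or.inl (Or.inl hl)), Or.inl (Or.inr hl), Or.inr (List.mem_of_mem_tail hl)]

end Path

theorem exists_geodesic_peakPit_restriction_general [DecidableEq α] (A B : Finset α)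
    (D : Set (List α)) (hD : IsPeakPitDomain A D)
    (R T : List α) (hR : R ∈ D) (hT : T ∈ D)
    (hBA : B ⊆ A) :
    ∃ P : List (List α),
      IsGeodesic B P (restrictOrd R B) (restrictOrd T B) ∧
        IsPeakPitDomain B (restrictDom D B ∪ {l | l ∈ P}) := by
  obtain ⟨P, hP, hlen, hpp⟩ :=
    exists_isPath_isPeakPitDomain_union (hD.restrict hBA) ⟨R, hR, rfl⟩ ⟨T, hT, rfl⟩
  exact ⟨P, ⟨hP, fun Q hQ => hlen ▸ hQ.invDist_add_one_le⟩, hpp⟩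

/-- Let `D` be a peak-pit Condorcet domain on `A`, let `R, T ∈ D`
and let `B ⊆ A` with `|B| ≥ 3`.  Then there is a geodesic `𝒜` connecting
`R_B` and `T_B` such that `D_B ∪ K(𝒜)` is a peak-pit Condorcet domain. -/
theorem exists_geodesic_peakPit_restriction [DecidableEq α] (A B : Finset α)
    (D : Set (List α)) (hD : IsPeakPitDomain A D)
    (R T : List α) (hR : R ∈ D) (hT : T ∈ D)
    (hBA : B ⊆ A) (hB : 3 ≤ B.card) :
    ∃ P : List (List α),
      IsGeodesic B P (restrictOrd R B) (restrictOrd T B) ∧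
        IsPeakPitDomain B (restrictDom D B ∪ {l | l ∈ P}) :=
  exists_geodesic_peakPit_restriction_general A B D hD R T hR hT hBA
end

section
/- Let a, b, c be distinct alternatives, let T ∈ L({a,b,c}), and let 𝒜 = (R_1,…,R_k) be a geodesic on L({a,b,c}) connecting abc and T. Then T = cba if and only if (a,b), (a,c) and (b,c) are all switching pairs occurring in S(𝒜). Moreover, if T = cba, then {R_1,…,R_k} satisfies a unique never-condition, which is either b N_{{a,b,c}} 3 or b N_{{a,b,c}} 1; and (a) N({R_1,…,R_k}) = {b N_{{a,b,c}} 3} if and only if 𝒜 = (abc, bac, bca, cba), if and only if S(𝒜) is the sequence (a,b), (a,c), (b,c); (b) N({R_1,…,R_k}) = {b N_{{a,b,c}} 1} if and only if 𝒜 = (abc, acb, cab, cba), if and only if S(𝒜) is the sequence (b,c), (a,c), (a,b). -/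
/-!
Common definitions for formalizing Condorcet domains.

A linear order on a finite set `A : Finset α` of alternatives is encoded as a
duplicate-free list enumerating the elements of `A` from most preferred (head)
to least preferred (last).
-/

variable {α : Type*}

/-!
On three alternatives an alike step swaps either the top two or the bottom two entries. Every
order other than `cba` is reached from `abc` in at most two such swaps, so a geodesic to it has
at most two switching pairs and cannot contain all three. Reaching `cba` takes three swaps, and
the only ways of doing so are `abc, bac, bca, cba` and `abc, acb, cab, cba`; their
never-conditions and switching sequences are read off directly.
-/

section Triple

variable [DecidableEq α]

theorem isLinOrd_iff_perm {A : Finset α} {l m : List α} (hm : IsLinOrd A m) :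
    IsLinOrd A l ↔ l.Perm m :=
  ⟨fun hl => List.perm_of_nodup_nodup_toFinset_eq hl.1 hm.1 (hl.2.trans hm.2.symm),
    fun h => ⟨h.nodup_iff.2 hm.1, (List.toFinset_eq_of_perm _ _ h).trans hm.2⟩⟩

theorem isLinOrd_triple {a b c : α} (hab : a ≠ b) (hac : a ≠ c) (hbc : b ≠ c) :
    IsLinOrd {a, b, c} [a, b, c] :=
  ⟨by simp [*], by simp⟩

theorem isLinOrd_triple_iff {a b c : α} (hab : a ≠ b) (hac : a ≠ c) (hbc : b ≠ c)
    {l : List α} :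
    IsLinOrd {a, b, c} l ↔ l = [a, b, c] ∨ l = [b, a, c] ∨ l = [c, b, a] ∨ l = [b, c, a] ∨
      l = [c, a, b] ∨ l = [a, c, b] := by
  rw [isLinOrd_iff_perm (isLinOrd_triple hab hac hbc), ← List.mem_permutations]
  simp [List.permutations]

theorem alike_triple_iff {x y z : α} {T : List α} :
    Alike [x, y, z] T ↔ x ≠ y ∧ T = [y, x, z] ∨ y ≠ z ∧ T = [x, z, y] := by
  constructor
  · rintro ⟨_ | ⟨w, _ | ⟨w', t⟩⟩, l₂, u, v, huv, hR, rfl⟩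
    · obtain ⟨rfl, rfl, rfl⟩ : x = u ∧ y = v ∧ [z] = l₂ := by simpa using hR
      exact .inl ⟨huv, rfl⟩
    · obtain ⟨rfl, rfl, rfl, rfl⟩ : x = w ∧ y = u ∧ z = v ∧ [] = l₂ := by simpa using hR
      exact .inr ⟨huv, rfl⟩
    · have := congrArg List.length hR
      simp only [List.length_cons, List.length_nil, List.length_append] at this
      omega
  · rintro (⟨h, rfl⟩ | ⟨h, rfl⟩)
    exacts [⟨[], [z], x, y, h, rfl, rfl⟩, ⟨[x], [], y, z, h, rfl, rfl⟩]

-- `IsPathOn` is phrased with the deprecated `List.Chain'`, invisible to the `List.IsChain` API.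
theorem isPathOn_iff {A : Finset α} {P : List (List α)} :
    IsPathOn A P ↔ P ≠ [] ∧ (∀ l ∈ P, IsLinOrd A l) ∧ P.IsChain Alike :=
  Iff.rfl

theorem IsPath.isLinOrd_last {A : Finset α} {P : List (List α)} {R T : List α}
    (hP : IsPath A P R T) : IsLinOrd A T :=
  hP.1.2.1 T (List.mem_of_getLast? hP.2.2)

theorem length_switchSeq_le (P : List (List α)) : (switchSeq P).length ≤ P.length - 1 := by
  simpa [switchSeq] using List.length_filterMap_le (fun p => switchPair? p.1 p.2) (P.zip P.tail)

theorem exists_isPath_length_le_three {a b c : α} (hab : a ≠ b) (hac : a ≠ c) (hbc : b ≠ c)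
    {T : List α} (hT : IsLinOrd {a, b, c} T) (hT' : T ≠ [c, b, a]) :
    ∃ Q, IsPath {a, b, c} Q [a, b, c] T ∧ Q.length ≤ 3 := by
  rcases (isLinOrd_triple_iff hab hac hbc).1 hT with rfl | rfl | rfl | rfl | rfl | rfl <;>
    [use [[a, b, c]]; use [[a, b, c], [b, a, c]]; exact absurd rfl hT';
      use [[a, b, c], [b, a, c], [b, c, a]]; use [[a, b, c], [a, c, b], [c, a, b]];
      use [[a, b, c], [a, c, b]]] <;>
    simp [IsPath, isPathOn_iff, isLinOrd_triple_iff hab hac hbc, alike_triple_iff,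
      hab, hac, hbc, hab.symm, hac.symm, hbc.symm]

theorem IsGeodesic.length_switchSeq_le_two {a b c : α} (hab : a ≠ b) (hac : a ≠ c)
    (hbc : b ≠ c) {P : List (List α)} {T : List α} (hP : IsGeodesic {a, b, c} P [a, b, c] T)
    (hT : T ≠ [c, b, a]) : (switchSeq P).length ≤ 2 := by
  obtain ⟨Q, hQ, hQlen⟩ := exists_isPath_length_le_three hab hac hbc hP.1.isLinOrd_last hT
  have := hP.2 Q hQ
  have := length_switchSeq_le P
  omega

theorem isPath_abc_bac_bca_cba {a b c : α} (hab : a ≠ b) (hac : a ≠ c) (hbc : b ≠ c) :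
    IsPath {a, b, c} [[a, b, c], [b, a, c], [b, c, a], [c, b, a]] [a, b, c] [c, b, a] := by
  simp [IsPath, isPathOn_iff, isLinOrd_triple_iff hab hac hbc, alike_triple_iff,
    hab, hac, hbc, hab.symm, hac.symm, hbc.symm]

theorem eq_of_isPath_reverse_of_length_le_four {a b c : α} (hab : a ≠ b) (hac : a ≠ c)
    (hbc : b ≠ c) {P : List (List α)} (hP : IsPath {a, b, c} P [a, b, c] [c, b, a])
    (hlen : P.length ≤ 4) :
    P = [[a, b, c], [b, a, c], [b, c, a], [c, b, a]] ∨
      P = [[a, b, c], [a, c, b], [c, a, b], [c, b, a]] := by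
  obtain ⟨⟨-, -, hchain⟩, hhead, hlast⟩ := hP
  replace hchain : P.IsChain Alike := hchain
  rcases P with _ | ⟨R1, _ | ⟨R2, _ | ⟨R3, _ | ⟨R4, _ | ⟨R5, rest⟩⟩⟩⟩⟩
  · simp at hhead
  all_goals
    simp only [List.head?_cons, Option.some.injEq] at hhead
    subst hhead
    simp only [List.getLast?_cons_cons, List.getLast?_singleton, Option.some.injEq] at hlast
    simp only [List.isChain_cons_cons, List.isChain_singleton, and_true,
      alike_triple_iff] at hchain
  · simp [hac] at hlast
  · subst hlast
    simp [hab, hac, hbc, hab.symm, hac.symm, hbc.symm] at hchain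
  · subst hlast
    obtain ⟨⟨-, rfl⟩ | ⟨-, rfl⟩, h⟩ := hchain <;>
      simp [alike_triple_iff, hab, hac, hbc, hab.symm, hac.symm, hbc.symm] at h
  · subst hlast
    obtain ⟨⟨-, rfl⟩ | ⟨-, rfl⟩, h, h'⟩ := hchain <;>
      rw [alike_triple_iff] at h <;> obtain ⟨-, rfl⟩ | ⟨-, rfl⟩ := h <;>
      simp [alike_triple_iff, hab, hac, hbc, hab.symm, hac.symm, hbc.symm] at h' ⊢
  · simp only [List.length_cons] at hlen
    omega

theorem IsGeodesic.eq_or_eq_of_reverse {a b c : α} (hab : a ≠ b) (hac : a ≠ c) (hbc : b ≠ c)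
    {P : List (List α)} (hP : IsGeodesic {a, b, c} P [a, b, c] [c, b, a]) :
    P = [[a, b, c], [b, a, c], [b, c, a], [c, b, a]] ∨
      P = [[a, b, c], [a, c, b], [c, a, b], [c, b, a]] :=
  eq_of_isPath_reverse_of_length_le_four hab hac hbc hP.1
    (by simpa using hP.2 _ (isPath_abc_bac_bca_cba hab hac hbc))

theorem switchSeq_abc_bac_bca_cba {a b c : α} (hab : a ≠ b) (hac : a ≠ c) (hbc : b ≠ c) :
    switchSeq [[a, b, c], [b, a, c], [b, c, a], [c, b, a]] = [s(a, b), s(a, c), s(b, c)] := by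
  simp [switchSeq, switchPair?, List.find?, hab, hac, hbc]

theorem switchSeq_abc_acb_cab_cba {a b c : α} (hab : a ≠ b) (hac : a ≠ c) (hbc : b ≠ c) :
    switchSeq [[a, b, c], [a, c, b], [c, a, b], [c, b, a]] = [s(b, c), s(a, c), s(a, b)] := by
  simp [switchSeq, switchPair?, List.find?, hab, hac, hbc]

theorem neverConds_abc_bac_bca_cba {a b c : α} (hab : a ≠ b) (hbc : b ≠ c) :
    NeverConds {a, b, c} {l | l ∈ [[a, b, c], [b, a, c], [b, c, a], [c, b, a]]} =
      {(b, (2 : Fin 3))} := by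
  ext ⟨x, k⟩
  fin_cases k <;> simp [NeverConds, NeverCond] <;> grind

theorem neverConds_abc_acb_cab_cba {a b c : α} (hab : a ≠ b) (hbc : b ≠ c) :
    NeverConds {a, b, c} {l | l ∈ [[a, b, c], [a, c, b], [c, a, b], [c, b, a]]} =
      {(b, (0 : Fin 3))} := by
  ext ⟨x, k⟩
  fin_cases k <;> simp [NeverConds, NeverCond] <;> grind

end Triple

theorem geodesic_on_triple_dichotomy_general [DecidableEq α] (a b c : α)
    (hab : a ≠ b) (hac : a ≠ c) (hbc : b ≠ c)
    (T : List α)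
    (P : List (List α)) (hP : IsGeodesic {a, b, c} P [a, b, c] T) :
    (T = [c, b, a] ↔
        (s(a, b) ∈ switchSeq P ∧ s(a, c) ∈ switchSeq P ∧ s(b, c) ∈ switchSeq P)) ∧
      (T = [c, b, a] →
        (NeverConds {a, b, c} {l | l ∈ P} = {(b, (2 : Fin 3))} ∨
            NeverConds {a, b, c} {l | l ∈ P} = {(b, (0 : Fin 3))}) ∧
          ((NeverConds {a, b, c} {l | l ∈ P} = {(b, (2 : Fin 3))} ↔
              P = [[a, b, c], [b, a, c], [b, c, a], [c, b, a]]) ∧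
            (NeverConds {a, b, c} {l | l ∈ P} = {(b, (2 : Fin 3))} ↔
              switchSeq P = [s(a, b), s(a, c), s(b, c)])) ∧
          ((NeverConds {a, b, c} {l | l ∈ P} = {(b, (0 : Fin 3))} ↔
              P = [[a, b, c], [a, c, b], [c, a, b], [c, b, a]]) ∧
            (NeverConds {a, b, c} {l | l ∈ P} = {(b, (0 : Fin 3))} ↔
              switchSeq P = [s(b, c), s(a, c), s(a, b)]))) := by
  refine ⟨⟨fun hT => ?_, fun hpairs => ?_⟩, fun hT => ?_⟩
  · subst hT
    rcases hP.eq_or_eq_of_reverse hab hac hbc with rfl | rfl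
    · simp [switchSeq_abc_bac_bca_cba hab hac hbc]
    · simp [switchSeq_abc_acb_cab_cba hab hac hbc]
  · by_contra hT
    have hnodup : [s(a, b), s(a, c), s(b, c)].Nodup := by
      simp [hab, hac, hbc, hab.symm, hbc.symm]
    have hge : 3 ≤ (switchSeq P).length :=
      (List.subperm_of_subset hnodup (by simpa using hpairs)).length_le
    have hle := hP.length_switchSeq_le_two hab hac hbc hT
    omega
  · subst hT
    rcases hP.eq_or_eq_of_reverse hab hac hbc with rfl | rfl
    · rw [neverConds_abc_bac_bca_cba hab hbc, switchSeq_abc_bac_bca_cba hab hac hbc]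
      simp [hab, hac, hbc, hab.symm, hac.symm, hbc.symm]
    · rw [neverConds_abc_acb_cab_cba hab hbc, switchSeq_abc_acb_cab_cba hab hac hbc]
      simp [hab, hac, hbc, hab.symm, hac.symm, hbc.symm]

/-- Let `a,b,c` be distinct, `T ∈ L({a,b,c})` and `𝒜` a geodesic
on `L({a,b,c})` connecting `abc` and `T`.  Then `T = cba` iff `(a,b)`, `(a,c)`
and `(b,c)` all occur as switching pairs in `S(𝒜)`.  Moreover, if `T = cba`,
then `{R_1,…,R_k}` satisfies a unique never-condition, which is `b N 3` or
`b N 1`, and: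
(a) `N({R_1,…,R_k}) = {b N 3}` iff `𝒜 = (abc,bac,bca,cba)` iff
    `S(𝒜) = ((a,b),(a,c),(b,c))`;
(b) `N({R_1,…,R_k}) = {b N 1}` iff `𝒜 = (abc,acb,cab,cba)` iff
    `S(𝒜) = ((b,c),(a,c),(a,b))`. -/
theorem geodesic_on_triple_dichotomy [DecidableEq α] (a b c : α)
    (hab : a ≠ b) (hac : a ≠ c) (hbc : b ≠ c)
    (T : List α) (hT : IsLinOrd {a, b, c} T)
    (P : List (List α)) (hP : IsGeodesic {a, b, c} P [a, b, c] T) :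
    (T = [c, b, a] ↔
        (s(a, b) ∈ switchSeq P ∧ s(a, c) ∈ switchSeq P ∧ s(b, c) ∈ switchSeq P)) ∧
      (T = [c, b, a] →
        (NeverConds {a, b, c} {l | l ∈ P} = {(b, (2 : Fin 3))} ∨
            NeverConds {a, b, c} {l | l ∈ P} = {(b, (0 : Fin 3))}) ∧
          ((NeverConds {a, b, c} {l | l ∈ P} = {(b, (2 : Fin 3))} ↔
              P = [[a, b, c], [b, a, c], [b, c, a], [c, b, a]]) ∧
            (NeverConds {a, b, c} {l | l ∈ P} = {(b, (2 : Fin 3))} ↔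
              switchSeq P = [s(a, b), s(a, c), s(b, c)])) ∧
          ((NeverConds {a, b, c} {l | l ∈ P} = {(b, (0 : Fin 3))} ↔
              P = [[a, b, c], [a, c, b], [c, a, b], [c, b, a]]) ∧
            (NeverConds {a, b, c} {l | l ∈ P} = {(b, (0 : Fin 3))} ↔
              switchSeq P = [s(b, c), s(a, c), s(a, b)]))) :=
  geodesic_on_triple_dichotomy_general a b c hab hac hbc T P hP
end

section
/- Any switching pair of alternatives in a geodesic 𝒜 occurs exactly once in S(𝒜); that is, if 𝒜 is a geodesic of alike linear orders, then every unordered pair of alternatives appears at most once as a switching pair in the sequence S(𝒜). -/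
/-!
Common definitions for formalizing Condorcet domains.

A linear order on a finite set `A : Finset α` of alternatives is encoded as a
duplicate-free list enumerating the elements of `A` from most preferred (head)
to least preferred (last).
-/

variable {α : Type*}

/-!
Write `[a, b] <+ l` for "`l` ranks `a` above `b`". Swapping an adjacent pair `x, y` changes the
relative order of `x` and `y` only, so along any path from `R` to `T` every pair inverted between
`R` and `T` occurs as a switching pair. Conversely, while `R ≠ T` some adjacent pair of `R` is
inverted in `T`, and swapping it removes that inversion and creates none (bubble sort), which
yields a path with one step per inversion. So a geodesic has at most as many steps as there are
inversions, while its switching pairs include all of them: no pair can repeat.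
-/

namespace List

theorem perm_swap_adjacent (l₁ l₂ : List α) (x y : α) :
    l₁ ++ x :: y :: l₂ ~ l₁ ++ y :: x :: l₂ :=
  (Perm.swap y x l₂).append_left l₁

theorem pair_sublist_append_cons_cons (l₁ l₂ : List α) (x y : α) :
    [x, y] <+ l₁ ++ x :: y :: l₂ :=
  (((nil_sublist l₂).cons_cons y).cons_cons x).trans (sublist_append_right l₁ _)

theorem pair_sublist_swap_adjacent {a b x y : α} {l₁ l₂ : List α}
    (h : [a, b] <+ l₁ ++ x :: y :: l₂) (hab : ¬(a = x ∧ b = y)) :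
    [a, b] <+ l₁ ++ y :: x :: l₂ := by
  induction l₁ with
  | nil =>
    rcases sublist_cons_iff.mp h with h | ⟨_, ⟨rfl, rfl⟩, hb⟩
    · rcases sublist_cons_iff.mp h with h | ⟨_, ⟨rfl, rfl⟩, hb⟩
      · exact (h.cons x).cons y
      · exact cons_sublist_cons.mpr (hb.cons x)
    · rcases sublist_cons_iff.mp hb with hb | ⟨_, ⟨rfl, -⟩, -⟩
      · exact (cons_sublist_cons.mpr hb).cons y
      · exact absurd ⟨rfl, rfl⟩ hab
  | cons c l₁ ih =>
    rcases sublist_cons_iff.mp h with h | ⟨_, ⟨rfl, rfl⟩, hb⟩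
    · exact (ih h).cons c
    · exact cons_sublist_cons.mpr (singleton_sublist.mpr
        ((perm_swap_adjacent l₁ l₂ x y).subset (singleton_sublist.mp hb)))

theorem pair_sublist_or_pair_sublist {a b : α} {l : List α} (hab : a ≠ b) (ha : a ∈ l)
    (hb : b ∈ l) : [a, b] <+ l ∨ [b, a] <+ l := by
  induction l with
  | nil => simp at ha
  | cons c l ih =>
    rcases mem_cons.mp ha with rfl | ha'
    · exact .inl (cons_sublist_cons.mpr
        (singleton_sublist.mpr ((mem_cons.mp hb).resolve_left hab.symm)))
    rcases mem_cons.mp hb with rfl | hb'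
    · exact .inr (cons_sublist_cons.mpr (singleton_sublist.mpr ha'))
    exact (ih ha' hb').imp (·.cons c) (·.cons c)

theorem Nodup.pair_sublist_trans {a b c : α} {l : List α} (hl : l.Nodup) (hab : [a, b] <+ l)
    (hbc : [b, c] <+ l) : [a, c] <+ l := by
  induction l with
  | nil => simp at hab
  | cons d l ih =>
    obtain ⟨hd, hl⟩ := nodup_cons.mp hl
    rcases sublist_cons_iff.mp hbc with hbc' | ⟨_, ⟨rfl, rfl⟩, -⟩
    · rcases sublist_cons_iff.mp hab with hab' | ⟨_, ⟨rfl, rfl⟩, -⟩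
      · exact (ih hl hab' hbc').cons d
      · exact cons_sublist_cons.mpr (singleton_sublist.mpr (hbc'.subset (by simp)))
    · rcases sublist_cons_iff.mp hab with hab' | ⟨_, ⟨rfl, rfl⟩, hb⟩
      · exact absurd (hab'.subset (by simp)) hd
      · exact absurd (singleton_sublist.mp hb) hd

theorem Nodup.not_pair_sublist_swap {a b : α} {l : List α} (hl : l.Nodup) (hab : [a, b] <+ l) :
    ¬[b, a] <+ l :=
  fun hba => nodup_iff_sublist.mp hl a (hl.pair_sublist_trans hab hba)

theorem exists_adjacent_inversion {R T : List α} (hR : R.Nodup) (hT : T.Nodup) (hRT : R ~ T)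
    (hne : R ≠ T) : ∃ l₁ l₂ x y, x ≠ y ∧ R = l₁ ++ x :: y :: l₂ ∧ [y, x] <+ T := by
  -- Otherwise `R` is sorted by the order of `T`, hence equal to `T`.
  by_contra! h
  let before (a b : α) : Prop := [a, b] <+ T
  have : Trans before before before := ⟨hT.pair_sublist_trans⟩
  have hchain : R.IsChain before := isChain_iff_forall_rel_of_append_cons_cons.mpr
    fun x y l₁ l₂ hR' => by
      have hxy : x ≠ y := fun hxy =>
        (nodup_cons.mp (hR' ▸ hR).of_append_right).1 (hxy ▸ mem_cons_self)
      have hmem : x ∈ R ∧ y ∈ R := by simp [hR']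
      exact (pair_sublist_or_pair_sublist hxy (hRT.subset hmem.1) (hRT.subset hmem.2)).resolve_right
        (h l₁ l₂ x y hxy hR')
  exact hne (hRT.eq_of_pairwise (fun a _ _ _ hab hba => (hT.not_pair_sublist_swap hab hba).elim)
    (isChain_iff_pairwise.mp hchain) (pairwise_iff_forall_sublist.mpr id))

end List

open List

section Geodesic

variable [DecidableEq α] {A : Finset α}

def inversions (R T : List α) : Finset (α × α) :=
  (R.toFinset ×ˢ R.toFinset).filter fun p => [p.1, p.2] <+ R ∧ [p.2, p.1] <+ T

theorem mem_inversions {R T : List α} {a b : α} :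
    (a, b) ∈ inversions R T ↔ [a, b] <+ R ∧ [b, a] <+ T := by
  simp only [inversions, Finset.mem_filter, Finset.mem_product, mem_toFinset,
    and_iff_right_iff_imp]
  exact fun h => ⟨h.1.subset (by simp), h.1.subset (by simp)⟩

theorem inversions_swap_ssubset {l₁ l₂ T : List α} {x y : α} (hR : (l₁ ++ x :: y :: l₂).Nodup)
    (hT : T.Nodup) (hyx : [y, x] <+ T) :
    inversions (l₁ ++ y :: x :: l₂) T ⊂ inversions (l₁ ++ x :: y :: l₂) T := by
  have hR' := (perm_swap_adjacent l₁ l₂ x y).nodup_iff.mp hR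
  refine (Finset.ssubset_iff_of_subset fun ⟨a, b⟩ hab => ?_).mpr
    ⟨(x, y), mem_inversions.mpr ⟨pair_sublist_append_cons_cons l₁ l₂ x y, hyx⟩,
      fun h => hR'.not_pair_sublist_swap (pair_sublist_append_cons_cons l₁ l₂ y x)
        (mem_inversions.mp h).1⟩
  obtain ⟨hab, hba⟩ := mem_inversions.mp hab
  refine mem_inversions.mpr ⟨pair_sublist_swap_adjacent hab ?_, hba⟩
  rintro ⟨rfl, rfl⟩
  exact hT.not_pair_sublist_swap hyx hba

theorem IsLinOrd.perm {l l' : List α} (hl : IsLinOrd A l) (hp : l ~ l') : IsLinOrd A l' :=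
  ⟨hp.nodup_iff.mp hl.1, (toFinset_eq_of_perm _ _ hp.symm).trans hl.2⟩

theorem IsLinOrd.perm_of_isLinOrd {l l' : List α} (hl : IsLinOrd A l) (hl' : IsLinOrd A l') :
    l ~ l' :=
  perm_of_nodup_nodup_toFinset_eq hl.1 hl'.1 (hl.2.trans hl'.2.symm)

theorem isPath_singleton {R : List α} (hR : IsLinOrd A R) : IsPath A [R] R R :=
  ⟨⟨cons_ne_nil R [], by simpa, isChain_singleton R⟩, rfl, rfl⟩

theorem IsPath.cons {P : List (List α)} {R S T : List α} (hR : IsLinOrd A R) (hRS : Alike R S)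
    (hP : IsPath A P S T) : IsPath A (R :: P) R T := by
  obtain ⟨⟨hne, hlin, hchain⟩, hS, hT⟩ := hP
  obtain ⟨S', P, rfl⟩ := exists_cons_of_ne_nil hne
  obtain rfl : S' = S := Option.some.inj hS
  refine ⟨⟨cons_ne_nil R _, forall_mem_cons.mpr ⟨hR, hlin⟩, isChain_cons_cons.mpr ⟨hRS, hchain⟩⟩,
    rfl, ?_⟩
  rwa [getLast?_cons_cons]

theorem IsPath.isLinOrd_left {P : List (List α)} {R T : List α} (hP : IsPath A P R T) :
    IsLinOrd A R :=
  hP.1.2.1 R (mem_of_mem_head? hP.2.1)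

theorem IsPath.isLinOrd_right {P : List (List α)} {R T : List α} (hP : IsPath A P R T) :
    IsLinOrd A T :=
  hP.1.2.1 T (mem_of_mem_getLast? hP.2.2)

theorem exists_isPath_length_le {R T : List α} (hR : IsLinOrd A R) (hT : IsLinOrd A T) :
    ∃ Q, IsPath A Q R T ∧ Q.length ≤ (inversions R T).card + 1 := by
  by_cases hRT : R = T
  · subst hRT
    exact ⟨[R], isPath_singleton hR, by simp⟩
  obtain ⟨l₁, l₂, x, y, hxy, rfl, hyx⟩ :=
    exists_adjacent_inversion hR.1 hT.1 (hR.perm_of_isLinOrd hT) hRT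
  have hlt := Finset.card_lt_card (inversions_swap_ssubset hR.1 hT.1 hyx)
  obtain ⟨Q, hQ, hlen⟩ := exists_isPath_length_le (hR.perm (perm_swap_adjacent l₁ l₂ x y)) hT
  exact ⟨_, hQ.cons hR ⟨l₁, l₂, x, y, hxy, rfl, rfl⟩, by rw [length_cons]; omega⟩
termination_by (inversions R T).card

theorem switchPair?_swap {l₁ l₂ : List α} {x y : α} (hxy : x ≠ y) :
    switchPair? (l₁ ++ x :: y :: l₂) (l₁ ++ y :: x :: l₂) = some s(x, y) := by
  have hsame : ∀ l : List α, (l.zip l).find? (fun p => !decide (p.1 = p.2)) = none := by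
    intro l
    induction l with
    | nil => rfl
    | cons a l ih => rwa [zip_cons_cons, find?_cons_of_neg (by simp)]
  simp [switchPair?, zip_append, find?_append, hsame, hxy]

theorem switchSeq_swap_cons {l₁ l₂ : List α} {x y : α} (hxy : x ≠ y) (P : List (List α)) :
    switchSeq ((l₁ ++ x :: y :: l₂) :: (l₁ ++ y :: x :: l₂) :: P) =
      s(x, y) :: switchSeq ((l₁ ++ y :: x :: l₂) :: P) := by
  simp only [switchSeq, tail_cons, zip_cons_cons, filterMap_cons, switchPair?_swap hxy]

theorem length_switchSeq : ∀ {P : List (List α)}, P.IsChain Alike →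
    (switchSeq P).length = P.length - 1
  | [], _ | [_], _ => rfl
  | _ :: _ :: P, hP => by
    obtain ⟨⟨l₁, l₂, x, y, hxy, rfl, rfl⟩, hrest⟩ := isChain_cons_cons.mp hP
    rw [switchSeq_swap_cons hxy, length_cons, length_switchSeq hrest]
    simp

theorem pair_sublist_of_notMem_switchSeq {a b : α} : ∀ {P : List (List α)} {R T : List α},
    P.IsChain Alike → P.head? = some R → P.getLast? = some T → s(a, b) ∉ switchSeq P →
      [a, b] <+ R → [a, b] <+ T
  | [], _, _, _, hR, _, _, _ => by simp at hR
  | [_], _, _, _, hR, hT, _, hab => by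
    obtain rfl := Option.some.inj hR
    obtain rfl := Option.some.inj hT
    exact hab
  | _ :: _ :: P, _, _, hP, hR, hT, hS, hab => by
    obtain ⟨⟨l₁, l₂, x, y, hxy, rfl, rfl⟩, hrest⟩ := isChain_cons_cons.mp hP
    obtain rfl := Option.some.inj hR
    rw [switchSeq_swap_cons hxy, mem_cons, not_or] at hS
    refine pair_sublist_of_notMem_switchSeq hrest rfl (by rwa [getLast?_cons_cons] at hT) hS.2
      (pair_sublist_swap_adjacent hab ?_)
    rintro ⟨rfl, rfl⟩
    exact hS.1 rfl

theorem IsPath.card_inversions_le {P : List (List α)} {R T : List α} (hP : IsPath A P R T) :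
    (inversions R T).card ≤ (switchSeq P).toFinset.card := by
  refine Finset.card_le_card_of_injOn (fun p => s(p.1, p.2)) (fun ⟨a, b⟩ hab => ?_) ?_
  · obtain ⟨hab, hba⟩ := mem_inversions.mp hab
    by_contra h
    exact hP.isLinOrd_right.1.not_pair_sublist_swap
      (pair_sublist_of_notMem_switchSeq hP.1.2.2 hP.2.1 hP.2.2 (by simpa using h) hab) hba
  · rintro ⟨a, b⟩ hab ⟨c, d⟩ hcd h
    rcases Sym2.eq_iff.mp h with ⟨rfl, rfl⟩ | ⟨rfl, rfl⟩
    · rfl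
    · exact (hP.isLinOrd_left.1.not_pair_sublist_swap (mem_inversions.mp hab).1
        (mem_inversions.mp hcd).1).elim

theorem IsGeodesic.length_switchSeq_le {P : List (List α)} {R T : List α}
    (hP : IsGeodesic A P R T) : (switchSeq P).length ≤ (inversions R T).card := by
  obtain ⟨Q, hQ, hlen⟩ := exists_isPath_length_le hP.1.isLinOrd_left hP.1.isLinOrd_right
  have := hP.2 Q hQ
  rw [length_switchSeq hP.1.1.2.2]
  omega

theorem IsGeodesic.nodup_switchSeq {P : List (List α)} {R T : List α}
    (hP : IsGeodesic A P R T) : (switchSeq P).Nodup :=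
  Multiset.toFinset_card_eq_card_iff_nodup.mp
    (le_antisymm (toFinset_card_le _) (hP.length_switchSeq_le.trans hP.1.card_inversions_le))

end Geodesic

/-- Any switching pair of alternatives of a geodesic occurs
exactly once in it: every unordered pair of alternatives appears at most once
as a switching pair in the sequence `S(𝒜)` of a geodesic `𝒜`. -/
theorem geodesic_switchPair_count_le_one [DecidableEq α] (A : Finset α)
    (P : List (List α)) (R T : List α) (hP : IsGeodesic A P R T) :
    ∀ p : Sym2 α, (switchSeq P).count p ≤ 1 :=
  nodup_iff_count_le_one.mp hP.nodup_switchSeq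
end
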